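/- arXiv:2301.09583 — 4 statements merged into one kernel-verified Lean document; each statement's English description precedes it below -/
import Mathlib

section
/- Let V be a finite-dimensional real vector space with a nondegenerate symmetric bilinear form B, and let E : V → V be a linear involution symmetric with respect to B (i.e. B(x, Ey) = B(Ex, y) for all x,y). Suppose F ⊆ V is a subspace such that E(F) is a complement to the orthogonal complement F^⊥ in V (i.e. V = F^⊥ ⊕ E(F)). Then the restriction of the bilinear form (x,y) ↦ B(x, Ey) to F is nondegenerate. -/
namespace LinearMap.BilinForm

variable {R M : Type*} [CommRing R] [AddCommGroup M] [Module R M]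

theorem apply_mem_orthogonal_of_forall_apply_comp_eq_zero (B : LinearMap.BilinForm R M)
    (hBsymm : ∀ x y, B x y = B y x) (E : M →ₗ[R] M) (hEsymm : ∀ x y, B x (E y) = B (E x) y)
    {F : Submodule R M} {x : M} (hx : ∀ y ∈ F, B x (E y) = 0) :
    E x ∈ B.orthogonal F := fun y hy => by
  show B y (E x) = 0
  rw [hEsymm, hBsymm, hx y hy]

end LinearMap.BilinForm

theorem stmt_1_general {V : Type*} [AddCommGroup V] [Module ℝ V]
    (B : LinearMap.BilinForm ℝ V)
    (hBsymm : ∀ x y, B x y = B y x)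
    (E : V →ₗ[ℝ] V) (hE : E ∘ₗ E = LinearMap.id)
    (hEsymm : ∀ x y, B x (E y) = B (E x) y)
    (F : Submodule ℝ V)
    (hcompl : IsCompl (B.orthogonal F) (F.map E)) :
    ∀ x ∈ F, (∀ y ∈ F, B x (E y) = 0) → x = 0 := by
  intro x hx hxy
  have hEx : E x ∈ B.orthogonal F ⊓ F.map E :=
    ⟨LinearMap.BilinForm.apply_mem_orthogonal_of_forall_apply_comp_eq_zero B hBsymm E hEsymm hxy,
      Submodule.mem_map_of_mem hx⟩
  rw [hcompl.inf_eq_bot, Submodule.mem_bot] at hEx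
  calc x = E (E x) := (LinearMap.congr_fun hE x).symm
    _ = 0 := by rw [hEx, map_zero]

/-- If `B` is a nondegenerate symmetric bilinear form on a finite-dimensional real vector
space `V`, `E` is a `B`-symmetric linear involution, and `F` is a subspace such that
`V = F^⊥ ⊕ E(F)`, then the restriction to `F` of the bilinear form `(x, y) ↦ B x (E y)`
is nondegenerate. -/
theorem stmt_1 {V : Type*} [AddCommGroup V] [Module ℝ V] [FiniteDimensional ℝ V]
    (B : LinearMap.BilinForm ℝ V) (hBnd : B.Nondegenerate)
    (hBsymm : ∀ x y, B x y = B y x)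
    (E : V →ₗ[ℝ] V) (hE : E ∘ₗ E = LinearMap.id)
    (hEsymm : ∀ x y, B x (E y) = B (E x) y)
    (F : Submodule ℝ V)
    (hcompl : IsCompl (B.orthogonal F) (F.map E)) :
    ∀ x ∈ F, (∀ y ∈ F, B x (E y) = 0) → x = 0 :=
  stmt_1_general B hBsymm E hE hEsymm F hcompl
end

section
/- The square confluent Cauchy–Vandermonde matrix with entries C^{(x,p)}_{(y,q)} = binom(p+q, p) · (−1)^p / (x−y)^{p+q+1}, indexed by pairs (x,p) with x ranging over a finite set of 'pole' points and p = 0,…,n_x−1, and (y,q) with y ranging over a disjoint finite set of 'zero' points and q = 0,…,m_y−1, where Σ n_x = Σ m_y and all x ≠ y, is invertible. -/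
/-!
The entry in row `(x, p)` and column `(y, q)` is the `p`-th Taylor coefficient at `x` of
`(t - y)⁻¹ ^ (q + 1)`. So if `C v = 0`, the rational function `f = ∑ v (y, q) / (t - y) ^ (q + 1)`
vanishes to order `n x` at every pole `x`. Over the common denominator `∏ (t - y) ^ m y` the
numerator of `f` has degree `< ∑ m y` and is divisible by `∏ (t - x) ^ n x`, of degree `∑ n x`,
so it is zero. Uniqueness of partial fractions then gives `v = 0`, and an injective square
matrix is invertible.
-/

open Polynomial Finset
open scoped PowerSeries Matrix

namespace Polynomial

variable {K : Type*} [Field K]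

theorem degree_prod_X_sub_C_pow (s : Finset K) (n : K → ℕ) :
    degree (∏ x ∈ s, (X - C x) ^ n x) = ∑ x ∈ s, n x := by
  simp only [degree_prod, degree_pow, degree_X_sub_C, nsmul_one, Nat.cast_sum]

theorem degree_sum_smul_X_sub_C_pow_lt (a : K) {k : ℕ} (w : Fin k → K) :
    degree (∑ q : Fin k, w q • (X - C a) ^ (k - (q + 1))) < k := by
  refine (degree_sum_le _ _).trans_lt ((Finset.sup_lt_iff (WithBot.bot_lt_coe k)).mpr
    fun q _ => (degree_smul_le _ _).trans_lt ?_)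
  rw [degree_pow, degree_X_sub_C, nsmul_one]
  exact Nat.cast_lt.mpr (by omega)

theorem eq_zero_of_X_sub_C_pow_dvd_sum_smul {a : K} {k : ℕ} {w : Fin k → K}
    (h : (X - C a) ^ k ∣ ∑ q : Fin k, w q • (X - C a) ^ (k - (q + 1))) : w = 0 := by
  rw [X_sub_C_pow_dvd_iff, ← taylor_apply, X_pow_dvd_iff] at h
  funext q
  have hq := h (k - (q + 1)) (by omega)
  simp only [map_sum, map_smul, taylor_pow, map_sub, taylor_X, taylor_C, add_sub_cancel_right,
    finsetSum_coeff, coeff_smul, coeff_X_pow] at hq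
  rwa [sum_eq_single q (fun q' _ hq' => by
      rw [if_neg (by have := Fin.val_injective.ne hq'; omega), smul_zero]) (by simp),
    if_pos rfl, smul_eq_mul, mul_one] at hq

end Polynomial

namespace CauchyVandermonde

variable {K : Type*} [Field K]

noncomputable def expansion (a : K) (q : ℕ) : K⟦X⟧ :=
  PowerSeries.mk fun j => ((j + q).choose j : K) * (-1) ^ j / a ^ (j + q + 1)

theorem expansion_eq_rescale_invOneSubPow (a : K) (q : ℕ) :
    expansion a q = PowerSeries.C (a⁻¹ ^ (q + 1)) *
      PowerSeries.rescale (-a⁻¹) (PowerSeries.invOneSubPow K (q + 1)).val := by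
  ext j
  rw [expansion, PowerSeries.coeff_mk, PowerSeries.coeff_C_mul, PowerSeries.coeff_rescale,
    PowerSeries.invOneSubPow_val_succ_eq_mk_add_choose, PowerSeries.coeff_mk, add_comm q j,
    Nat.choose_symm_add, div_eq_mul_inv, ← inv_pow]
  ring

theorem expansion_mul_C_add_X_pow {a : K} (ha : a ≠ 0) (q : ℕ) :
    expansion a q * (PowerSeries.C a + PowerSeries.X) ^ (q + 1) = 1 := by
  have h : (PowerSeries.C a + PowerSeries.X : K⟦X⟧) =
      PowerSeries.C a * PowerSeries.rescale (-a⁻¹) (1 - PowerSeries.X) := by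
    rw [map_sub, map_one, PowerSeries.rescale_X, mul_sub, mul_one, ← mul_assoc, ← map_mul,
      mul_neg, mul_inv_cancel₀ ha, map_neg, map_one, neg_one_mul, sub_neg_eq_add]
  rw [expansion_eq_rescale_invOneSubPow, h, mul_pow, ← map_pow, mul_mul_mul_comm, ← map_mul,
    inv_pow, inv_mul_cancel₀ (pow_ne_zero _ ha), map_one, one_mul, ← map_pow, ← map_mul,
    ← PowerSeries.invOneSubPow_inv_eq_one_sub_pow, (PowerSeries.invOneSubPow K (q + 1)).val_inv,
    map_one]

theorem coe_taylor_eq_expansion_mul {x y : K} (hxy : x ≠ y) {q : ℕ} {A B : K[X]}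
    (h : (X - C y) ^ (q + 1) * A = B) :
    (taylor x A : K⟦X⟧) = expansion (x - y) q * taylor x B := by
  have hX : taylor x (X - C y) = C (x - y) + X := by
    rw [map_sub, taylor_X, taylor_C, C_sub]; ring
  rw [← h, taylor_mul, taylor_pow, hX, Polynomial.coe_mul, Polynomial.coe_pow,
    Polynomial.coe_add, Polynomial.coe_C, Polynomial.coe_X, ← mul_assoc,
    expansion_mul_C_add_X_pow (sub_ne_zero.mpr hxy), one_mul]

section Matrix

variable (z ζ : Finset K) (n m : K → ℕ)

noncomputable def matrix : Matrix (Σ x : z, Fin (n x)) (Σ y : ζ, Fin (m y)) K :=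
  Matrix.of fun xp yq => PowerSeries.coeff xp.2 (expansion (xp.1 - yq.1 : K) yq.2)

theorem matrix_mulVec_apply (v : (Σ y : ζ, Fin (m y)) → K) (x : z) (p : Fin (n x)) :
    (matrix z ζ n m *ᵥ v) ⟨x, p⟩ =
      PowerSeries.coeff p
        (∑ yq : Σ y : ζ, Fin (m y), v yq • expansion ((x : K) - yq.1) yq.2) := by
  simp [Matrix.mulVec, dotProduct, matrix, mul_comm]

end Matrix

section PartialFractions

variable [DecidableEq K] (ζ : Finset K) (m : K → ℕ)

noncomputable def denom : K[X] := ∏ y ∈ ζ, (X - C y) ^ m y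

noncomputable def cofactor (y : K) : K[X] := ∏ y' ∈ ζ.erase y, (X - C y') ^ m y'

/-- `numer ζ m v / denom ζ m = ∑ v (y, q) / (X - y) ^ (q + 1)`. -/
noncomputable def numer (v : (Σ y : ζ, Fin (m y)) → K) : K[X] :=
  ∑ y : ζ, (∑ q : Fin (m y), v ⟨y, q⟩ • (X - C (y : K)) ^ (m y - (q + 1))) * cofactor ζ m y

variable {ζ m}

theorem cofactor_ne_zero (y : K) : cofactor ζ m y ≠ 0 :=
  prod_ne_zero_iff.mpr fun y' _ => pow_ne_zero _ (X_sub_C_ne_zero y')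

theorem X_sub_C_pow_mul_cofactor {y : K} (hy : y ∈ ζ) :
    (X - C y) ^ m y * cofactor ζ m y = denom ζ m :=
  mul_prod_erase ζ (fun y' => (X - C y') ^ m y') hy

theorem X_sub_C_pow_dvd_cofactor {y y' : K} (hy : y ∈ ζ) (hne : y ≠ y') :
    (X - C y) ^ m y ∣ cofactor ζ m y' :=
  dvd_prod_of_mem _ (mem_erase.mpr ⟨hne, hy⟩)

theorem isCoprime_X_sub_C_pow_cofactor (y : K) :
    IsCoprime ((X - C y) ^ m y) (cofactor ζ m y) :=
  .pow_left <| .prod_right fun _ hy' => .pow_right <|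
    isCoprime_X_sub_C_of_isUnit_sub (sub_ne_zero.mpr (ne_of_mem_erase hy').symm).isUnit

theorem degree_cofactor_add {y : K} (hy : y ∈ ζ) :
    degree (cofactor ζ m y) + m y = ∑ y ∈ ζ, m y := by
  have h := congrArg degree (X_sub_C_pow_mul_cofactor (m := m) hy)
  rwa [degree_mul, degree_pow, degree_X_sub_C, nsmul_one, add_comm, denom,
    degree_prod_X_sub_C_pow] at h

theorem degree_numer_lt (v : (Σ y : ζ, Fin (m y)) → K) :
    degree (numer ζ m v) < ∑ y ∈ ζ, m y := by
  refine (degree_sum_le _ _).trans_lt ((Finset.sup_lt_iff (WithBot.bot_lt_coe _)).mpr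
    fun y _ => (degree_mul_le _ _).trans_lt ?_)
  rw [← degree_cofactor_add y.2, add_comm]
  exact WithBot.add_lt_add_left (degree_ne_bot.mpr (cofactor_ne_zero _))
    (degree_sum_smul_X_sub_C_pow_lt _ _)

theorem eq_zero_of_numer_eq_zero {v : (Σ y : ζ, Fin (m y)) → K} (h : numer ζ m v = 0) :
    v = 0 := by
  funext ⟨y, q⟩
  suffices (X - C (y : K)) ^ m y ∣
      ∑ q : Fin (m y), v ⟨y, q⟩ • (X - C (y : K)) ^ (m y - (q + 1)) from
    congrFun (eq_zero_of_X_sub_C_pow_dvd_sum_smul this) q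
  refine (isCoprime_X_sub_C_pow_cofactor (ζ := ζ) (y : K)).dvd_of_dvd_mul_right ?_
  have hsplit := add_sum_erase _ (fun y : ζ => (∑ q : Fin (m y),
    v ⟨y, q⟩ • (X - C (y : K)) ^ (m y - (q + 1))) * cofactor ζ m y) (mem_univ y)
  rw [← numer, h] at hsplit
  refine (dvd_add_left (dvd_sum fun y' hy' => dvd_mul_of_dvd_right
    (X_sub_C_pow_dvd_cofactor y.2 ?_) _)).mp (hsplit ▸ dvd_zero _)
  exact fun h => (ne_of_mem_erase hy') (Subtype.ext h.symm)

theorem coe_taylor_numer {x : K} (hx : x ∉ ζ) (v : (Σ y : ζ, Fin (m y)) → K) :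
    (taylor x (numer ζ m v) : K⟦X⟧) =
      (∑ yq : Σ y : ζ, Fin (m y), v yq • expansion (x - yq.1) yq.2) *
        taylor x (denom ζ m) := by
  rw [Fintype.sum_sigma, sum_mul, numer, map_sum, ← coeToPowerSeries.ringHom_apply, map_sum]
  refine sum_congr rfl fun y _ => ?_
  rw [sum_mul, sum_mul, map_sum, map_sum]
  refine sum_congr rfl fun q _ => ?_
  rw [smul_mul_assoc, map_smul, coeToPowerSeries.ringHom_apply, Polynomial.coe_smul,
    smul_mul_assoc, coe_taylor_eq_expansion_mul (ne_of_mem_of_not_mem y.2 hx).symm (by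
      rw [← mul_assoc, ← pow_add, Nat.add_sub_cancel' q.2, X_sub_C_pow_mul_cofactor y.2])]

variable {z : Finset K} {n : K → ℕ}

theorem X_sub_C_pow_dvd_numer_of_mulVec_eq_zero (hdisj : Disjoint z ζ)
    {v : (Σ y : ζ, Fin (m y)) → K} (hv : matrix z ζ n m *ᵥ v = 0) (x : z) :
    (X - C (x : K)) ^ n x ∣ numer ζ m v := by
  have hF : PowerSeries.X ^ n x ∣
      ∑ yq : Σ y : ζ, Fin (m y), v yq • expansion ((x : K) - yq.1) yq.2 :=
    PowerSeries.X_pow_dvd_iff.mpr fun p hp => by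
      rw [← matrix_mulVec_apply z ζ n m v x ⟨p, hp⟩, hv, Pi.zero_apply]
  rw [X_sub_C_pow_dvd_iff, ← taylor_apply, X_pow_dvd_iff]
  intro d hd
  have h := PowerSeries.X_pow_dvd_iff.mp
    (dvd_mul_of_dvd_left hF (taylor (x : K) (denom ζ m) : K⟦X⟧)) d hd
  rwa [← coe_taylor_numer (disjoint_left.mp hdisj x.2), coeff_coe] at h

theorem eq_zero_of_matrix_mulVec_eq_zero (hdisj : Disjoint z ζ)
    (hle : ∑ y ∈ ζ, m y ≤ ∑ x ∈ z, n x) {v : (Σ y : ζ, Fin (m y)) → K}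
    (hv : matrix z ζ n m *ᵥ v = 0) : v = 0 := by
  have hdvd : (∏ x ∈ z, (X - C x) ^ n x) ∣ numer ζ m v :=
    prod_dvd_of_coprime
      (fun a _ b _ hab => (isCoprime_X_sub_C_of_isUnit_sub (sub_ne_zero.mpr hab).isUnit).pow)
      fun x hx => X_sub_C_pow_dvd_numer_of_mulVec_eq_zero hdisj hv ⟨x, hx⟩
  refine eq_zero_of_numer_eq_zero (eq_zero_of_dvd_of_degree_lt hdvd
    ((degree_numer_lt v).trans_le ?_))
  rw [degree_prod_X_sub_C_pow]
  exact_mod_cast hle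

end PartialFractions

end CauchyVandermonde

theorem stmt_5_general (z ζ : Finset ℂ) (hdisj : Disjoint z ζ)
    (n m : ℂ → ℕ)
    (hsum : ∑ x ∈ z, n x = ∑ y ∈ ζ, m y)
    (C : Matrix (Σ x : {x // x ∈ z}, Fin (n ↑x)) (Σ y : {y // y ∈ ζ}, Fin (m ↑y)) ℂ)
    (hC : ∀ xp yq, C xp yq =
      (Nat.choose ((xp.2 : ℕ) + (yq.2 : ℕ)) (xp.2 : ℕ) : ℂ) * (-1) ^ (xp.2 : ℕ)
        / (((xp.1 : ℂ)) - ((yq.1 : ℂ))) ^ ((xp.2 : ℕ) + (yq.2 : ℕ) + 1)) :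
    Function.Bijective C.mulVecLin := by
  obtain rfl : C = CauchyVandermonde.matrix z ζ n m := Matrix.ext fun xp yq => by
    rw [hC, CauchyVandermonde.matrix, Matrix.of_apply, CauchyVandermonde.expansion,
      PowerSeries.coeff_mk]
  have hinj : Function.Injective (CauchyVandermonde.matrix z ζ n m).mulVecLin :=
    (injective_iff_map_eq_zero _).mpr fun v hv =>
      CauchyVandermonde.eq_zero_of_matrix_mulVec_eq_zero hdisj hsum.ge hv
  refine ⟨hinj, (LinearMap.injective_iff_surjective_of_finrank_eq_finrank ?_).mp hinj⟩
  simp only [Module.finrank_fintype_fun_eq_card, Fintype.card_sigma, Fintype.card_fin,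
    sum_coe_sort, hsum]

/-- The square confluent Cauchy–Vandermonde matrix, with rows indexed by pairs `(x, p)`
(`x` in a finite set of poles, `0 ≤ p < n x`), columns indexed by pairs `(y, q)`
(`y` in a disjoint finite set of zeroes, `0 ≤ q < m y`), with `∑ n x = ∑ m y` and entries
`C (x,p) (y,q) = (p+q choose p) * (-1)^p / (x - y)^(p+q+1)`, is invertible. -/
theorem stmt_5 (z ζ : Finset ℂ) (hdisj : Disjoint z ζ)
    (n m : ℂ → ℕ) (hn : ∀ x ∈ z, 1 ≤ n x) (hm : ∀ y ∈ ζ, 1 ≤ m y)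
    (hsum : ∑ x ∈ z, n x = ∑ y ∈ ζ, m y)
    (C : Matrix (Σ x : {x // x ∈ z}, Fin (n ↑x)) (Σ y : {y // y ∈ ζ}, Fin (m ↑y)) ℂ)
    (hC : ∀ xp yq, C xp yq =
      (Nat.choose ((xp.2 : ℕ) + (yq.2 : ℕ)) (xp.2 : ℕ) : ℂ) * (-1) ^ (xp.2 : ℕ)
        / (((xp.1 : ℂ)) - ((yq.1 : ℂ))) ^ ((xp.2 : ℕ) + (yq.2 : ℕ) + 1)) :
    Function.Bijective C.mulVecLin :=
  stmt_5_general z ζ hdisj n m hsum C hC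
end

section
/- Define on the Takiff algebra d = g ⊗ ℝ[ε]/(ε^n) the bilinear form ⟨⟨u⊗ε^p, v⊗ε^q⟩⟩ = ℓ_{p+q} ⟨u,v⟩ where ⟨·,·⟩ is a nondegenerate invariant symmetric bilinear form on g and ℓ₀,…,ℓ_{n−1} ∈ ℝ with ℓ_{n−1} ≠ 0 (and ℓ_k = 0 for k ≥ n). Then ⟨⟨·,·⟩⟩ is a nondegenerate, symmetric, ad-invariant bilinear form on d. -/
/-!
Both `⟪[u, v], w⟫` and `⟪u, [v, w]⟫` expand, by invariance of `⟨·,·⟩` and after reindexing the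
truncated convolutions, to `∑_{a,b,c} ℓ_{a+b+c} ⟨u_a, [v_b, w_c]⟩`. For nondegeneracy, pairing `u`
with `x ⊗ ε^{n-1-p}` picks out `ℓ_{n-1} ⟨u_p, x⟩` once the lower components of `u` are known to
vanish, since `ℓ` vanishes in degrees `≥ n`; so `u_0, u_1, …` vanish in turn.
-/

open Finset

theorem sum_range_diag_eq_sum_range_sum_range {M : Type*} [AddCommMonoid M] {n : ℕ}
    {f : ℕ → ℕ → M} (hf : ∀ a b, n ≤ a + b → f a b = 0) :
    ∑ m ∈ range n, ∑ k ∈ range (m + 1), f k (m - k) =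
      ∑ a ∈ range n, ∑ b ∈ range n, f a b := by
  rw [sum_range_diag_flip]
  refine sum_congr rfl fun a _ ↦ sum_subset (range_subset_range.2 (n.sub_le a)) fun b _ hb ↦ ?_
  exact hf a b (by rw [mem_range] at hb; omega)

namespace Takiff

def bracket {g : Type*} [LieRing g] (n : ℕ) (u v : ℕ → g) (k : ℕ) : g :=
  if k < n then ∑ i ∈ range (k + 1), ⁅u i, v (k - i)⁆ else 0

def pairing {g : Type*} [AddCommGroup g] [Module ℝ g] (B : LinearMap.BilinForm ℝ g) (n : ℕ)
    (ℓ : ℕ → ℝ) (u v : ℕ → g) : ℝ :=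
  ∑ p ∈ range n, ∑ q ∈ range n, ℓ (p + q) * B (u p) (v q)

section Form

variable {g : Type*} [AddCommGroup g] [Module ℝ g] {B : LinearMap.BilinForm ℝ g} {n : ℕ}
  {ℓ : ℕ → ℝ}

theorem pairing_comm (hB : ∀ x y, B x y = B y x) (u v : ℕ → g) :
    pairing B n ℓ u v = pairing B n ℓ v u := by
  rw [pairing, pairing, sum_comm]
  exact sum_congr rfl fun q _ ↦ sum_congr rfl fun p _ ↦ by rw [hB, add_comm]

theorem pairing_single (u : ℕ → g) {q : ℕ} (hq : q < n) (x : g) :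
    pairing B n ℓ u (Pi.single q x) = ∑ p ∈ range n, ℓ (p + q) * B (u p) x := by
  refine sum_congr rfl fun p _ ↦ ?_
  rw [sum_eq_single_of_mem q (mem_range.2 hq) fun q' _ hq' ↦ by simp [hq'], Pi.single_eq_same]

theorem eq_zero_of_pairing_eq_zero (hB : ∀ x, (∀ y, B x y = 0) → x = 0) (hℓtop : ℓ (n - 1) ≠ 0)
    (hℓ : ∀ k, n ≤ k → ℓ k = 0) {u : ℕ → g} (hu : ∀ v, pairing B n ℓ u v = 0) :
    ∀ p < n, u p = 0 := by
  intro p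
  induction p using Nat.strong_induction_on with
  | _ p ih =>
    intro hp
    refine hB _ fun x ↦ ?_
    have hsingle := hu (Pi.single (n - 1 - p) x)
    rw [pairing_single u (by omega), sum_eq_single_of_mem p (mem_range.2 hp) fun p' hp' hne ↦ ?_,
      show p + (n - 1 - p) = n - 1 by omega] at hsingle
    · exact (mul_eq_zero.1 hsingle).resolve_left hℓtop
    rcases hne.lt_or_gt with hlt | hgt
    · rw [ih p' hlt (mem_range.1 hp'), map_zero, LinearMap.zero_apply, mul_zero]
    · rw [hℓ _ (by omega), zero_mul]

end Form

section Lie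

variable {g : Type*} [LieRing g] [LieAlgebra ℝ g] {B : LinearMap.BilinForm ℝ g} {n : ℕ}
  {ℓ : ℕ → ℝ}

theorem pairing_bracket_left (hBinv : ∀ x y z : g, B ⁅x, y⁆ z = B x ⁅y, z⁆)
    (hℓ : ∀ k, n ≤ k → ℓ k = 0) (u v w : ℕ → g) :
    pairing B n ℓ (bracket n u v) w =
      ∑ a ∈ range n, ∑ b ∈ range n, ∑ c ∈ range n, ℓ (a + b + c) * B (u a) ⁅v b, w c⁆ := by
  have expand : ∀ q, ∑ p ∈ range n, ℓ (p + q) * B (bracket n u v p) (w q) =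
      ∑ p ∈ range n, ∑ i ∈ range (p + 1), ℓ (i + (p - i) + q) * B (u i) ⁅v (p - i), w q⁆ := by
    refine fun q ↦ sum_congr rfl fun p hp ↦ ?_
    rw [bracket, if_pos (mem_range.1 hp), map_sum, LinearMap.sum_apply, mul_sum]
    refine sum_congr rfl fun i hi ↦ ?_
    rw [hBinv, Nat.add_sub_cancel' (Nat.lt_succ_iff.1 (mem_range.1 hi))]
  have hf : ∀ q, ∀ a b, n ≤ a + b → ℓ (a + b + q) * B (u a) ⁅v b, w q⁆ = 0 :=
    fun q a b hab ↦ by rw [hℓ _ (hab.trans (Nat.le_add_right _ q)), zero_mul]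
  rw [pairing, sum_comm]
  simp_rw [expand, sum_range_diag_eq_sum_range_sum_range (hf _)]
  rw [sum_comm]
  exact sum_congr rfl fun a _ ↦ sum_comm

theorem pairing_bracket_right (hℓ : ∀ k, n ≤ k → ℓ k = 0) (u v w : ℕ → g) :
    pairing B n ℓ u (bracket n v w) =
      ∑ a ∈ range n, ∑ b ∈ range n, ∑ c ∈ range n, ℓ (a + b + c) * B (u a) ⁅v b, w c⁆ := by
  have expand : ∀ p, ∑ q ∈ range n, ℓ (p + q) * B (u p) (bracket n v w q) =
      ∑ q ∈ range n, ∑ j ∈ range (q + 1), ℓ (p + j + (q - j)) * B (u p) ⁅v j, w (q - j)⁆ := by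
    refine fun p ↦ sum_congr rfl fun q hq ↦ ?_
    rw [bracket, if_pos (mem_range.1 hq), map_sum, mul_sum]
    refine sum_congr rfl fun j hj ↦ ?_
    rw [add_assoc, Nat.add_sub_cancel' (Nat.lt_succ_iff.1 (mem_range.1 hj))]
  have hf : ∀ p, ∀ b c, n ≤ b + c → ℓ (p + b + c) * B (u p) ⁅v b, w c⁆ = 0 :=
    fun p b c hbc ↦ by rw [hℓ _ (by omega), zero_mul]
  rw [pairing]
  simp_rw [expand, sum_range_diag_eq_sum_range_sum_range (hf _)]

theorem pairing_bracket_left_eq (hBinv : ∀ x y z : g, B ⁅x, y⁆ z = B x ⁅y, z⁆)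
    (hℓ : ∀ k, n ≤ k → ℓ k = 0) (u v w : ℕ → g) :
    pairing B n ℓ (bracket n u v) w = pairing B n ℓ u (bracket n v w) := by
  rw [pairing_bracket_left hBinv hℓ, pairing_bracket_right hℓ]

end Lie

end Takiff

open Takiff in
theorem stmt_8_general {g : Type*} [LieRing g] [LieAlgebra ℝ g]
    (B : LinearMap.BilinForm ℝ g) (hBsymm : ∀ x y, B x y = B y x)
    (hBinv : ∀ x y z : g, B ⁅x, y⁆ z = B x ⁅y, z⁆)
    (hBnd : B.Nondegenerate)
    (n : ℕ)
    (ℓ : ℕ → ℝ) (hltop : ℓ (n - 1) ≠ 0) (hlzero : ∀ k, n ≤ k → ℓ k = 0)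
    (BB : (ℕ → g) → (ℕ → g) → ℝ)
    (hBB : ∀ u v, BB u v =
      ∑ p ∈ Finset.range n, ∑ q ∈ Finset.range n, ℓ (p + q) * B (u p) (v q))
    (br : (ℕ → g) → (ℕ → g) → (ℕ → g))
    (hbr : ∀ u v k, br u v k =
      if k < n then ∑ i ∈ Finset.range (k + 1), ⁅u i, v (k - i)⁆ else 0) :
    (∀ u v, BB u v = BB v u) ∧
    (∀ u v w, BB (br u v) w = BB u (br v w)) ∧
    (∀ u, (∀ v, BB u v = 0) → ∀ p < n, u p = 0) := by
  obtain rfl : BB = pairing B n ℓ := funext₂ hBB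
  obtain rfl : br = bracket n := funext₂ fun u v ↦ funext (hbr u v)
  exact ⟨pairing_comm hBsymm, pairing_bracket_left_eq hBinv hlzero,
    fun u hu ↦ eq_zero_of_pairing_eq_zero hBnd.1 hltop hlzero hu⟩

/-- On the Takiff algebra `d = g ⊗ ℝ[ε]/(ε^n)` (modelled by sequences `ℕ → g`, of which
only the first `n` entries are relevant, with the truncated convolution bracket `br`),
the bilinear form `⟪u ⊗ ε^p, v ⊗ ε^q⟫ = ℓ_{p+q} ⟨u, v⟩` (with `⟨·,·⟩` a nondegenerate
invariant symmetric form on `g`, `ℓ_{n-1} ≠ 0`, `ℓ_k = 0` for `k ≥ n`) is symmetric,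
ad-invariant and nondegenerate. -/
theorem stmt_8 {g : Type*} [LieRing g] [LieAlgebra ℝ g]
    (B : LinearMap.BilinForm ℝ g) (hBsymm : ∀ x y, B x y = B y x)
    (hBinv : ∀ x y z : g, B ⁅x, y⁆ z = B x ⁅y, z⁆)
    (hBnd : B.Nondegenerate)
    (n : ℕ) (hn : 1 ≤ n)
    (ℓ : ℕ → ℝ) (hltop : ℓ (n - 1) ≠ 0) (hlzero : ∀ k, n ≤ k → ℓ k = 0)
    (BB : (ℕ → g) → (ℕ → g) → ℝ)
    (hBB : ∀ u v, BB u v =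
      ∑ p ∈ Finset.range n, ∑ q ∈ Finset.range n, ℓ (p + q) * B (u p) (v q))
    (br : (ℕ → g) → (ℕ → g) → (ℕ → g))
    (hbr : ∀ u v k, br u v k =
      if k < n then ∑ i ∈ Finset.range (k + 1), ⁅u i, v (k - i)⁆ else 0) :
    (∀ u v, BB u v = BB v u) ∧
    (∀ u v w, BB (br u v) w = BB u (br v w)) ∧
    (∀ u, (∀ v, BB u v = 0) → ∀ p < n, u p = 0) :=
  stmt_8_general B hBsymm hBinv hBnd n ℓ hltop hlzero BB hBB br hbr
end

section
/- In the Lie group D = G × 𝔤 × 𝔤 × 𝔤 (third-order jet group, right trivialisation) with multiplication (g,u,v,w)(g̃,x,y,z) = (gg̃, u + Ad_g x, v + Ad_g y + ½[u, Ad_g x], w + Ad_g z + ⅔[u, Ad_g y] + ⅓[v, Ad_g x] + ⅙[u,[u, Ad_g x]]), the inverse of (g,u,v,w) is (g^{-1}, −Ad_g^{-1}u, −Ad_g^{-1}v, −Ad_g^{-1}w + ⅓ Ad_g^{-1}[u,v]), i.e., the product of (g,u,v,w) with this element (in either order) is the identity (e, 0, 0, 0). -/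
/-- In the third-order jet group `D = G × 𝔤 × 𝔤 × 𝔤` (right trivialisation) with the
stated multiplication, the inverse of `(g, u, v, w)` is
`(g⁻¹, -Ad_g⁻¹ u, -Ad_g⁻¹ v, -Ad_g⁻¹ w + ⅓ Ad_g⁻¹ ⁅u, v⁆)`: its product with
`(g, u, v, w)`, in either order, is the identity `(1, 0, 0, 0)`. -/
theorem stmt_18 {G : Type*} [Group G] {g : Type*} [LieRing g] [LieAlgebra ℝ g]
    (Ad : G → (g ≃ₗ[ℝ] g))
    (hAd1 : Ad 1 = LinearEquiv.refl ℝ g)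
    (hAdmul : ∀ (a b : G) (x : g), Ad (a * b) x = Ad a (Ad b x))
    (hAdbr : ∀ (a : G) (x y : g), Ad a ⁅x, y⁆ = ⁅Ad a x, Ad a y⁆)
    (mul : (G × g × g × g) → (G × g × g × g) → (G × g × g × g))
    (hmul : ∀ p q, mul p q =
      (p.1 * q.1,
       p.2.1 + Ad p.1 q.2.1,
       p.2.2.1 + Ad p.1 q.2.2.1 + (2⁻¹ : ℝ) • ⁅p.2.1, Ad p.1 q.2.1⁆,
       p.2.2.2 + Ad p.1 q.2.2.2 + (2 / 3 : ℝ) • ⁅p.2.1, Ad p.1 q.2.2.1⁆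
         + (3⁻¹ : ℝ) • ⁅p.2.2.1, Ad p.1 q.2.1⁆
         + (6⁻¹ : ℝ) • ⁅p.2.1, ⁅p.2.1, Ad p.1 q.2.1⁆⁆))
    (inv : (G × g × g × g) → (G × g × g × g))
    (hinv : ∀ p, inv p =
      (p.1⁻¹, -(Ad p.1).symm p.2.1, -(Ad p.1).symm p.2.2.1,
        -(Ad p.1).symm p.2.2.2 + (3⁻¹ : ℝ) • (Ad p.1).symm ⁅p.2.1, p.2.2.1⁆)) :
    ∀ p, mul p (inv p) = (1, 0, 0, 0) ∧ mul (inv p) p = (1, 0, 0, 0) := by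
  rintro ⟨g0, u, v, w⟩
  have hsymm_br : ∀ (x y : g), (Ad g0).symm ⁅x, y⁆ = ⁅(Ad g0).symm x, (Ad g0).symm y⁆ := by
    intro x y
    apply (Ad g0).injective
    rw [hAdbr, LinearEquiv.apply_symm_apply, LinearEquiv.apply_symm_apply,
      LinearEquiv.apply_symm_apply]
  have hinvAd : ∀ x : g, Ad g0⁻¹ x = (Ad g0).symm x := by
    intro x
    apply (Ad g0).injective
    rw [← hAdmul, mul_inv_cancel, hAd1, LinearEquiv.apply_symm_apply]
    rfl
  constructor <;>
  · simp only [hmul, hinv, hinvAd, Prod.mk.injEq, map_add, map_neg, map_smul,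
      LinearEquiv.apply_symm_apply, LinearEquiv.symm_apply_apply, hsymm_br,
      lie_neg, neg_lie, lie_self, neg_neg, smul_neg, smul_zero, neg_zero,
      mul_inv_cancel, inv_mul_cancel]
    refine ⟨trivial, by abel, by module, ?_⟩
    simp only [hAdbr, LinearEquiv.apply_symm_apply, lie_zero, smul_zero, ← lie_skew v u,
      ← lie_skew ((Ad g0).symm v) ((Ad g0).symm u)]
    module
end
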